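/- Let δ, δ' ≥ 2 be real numbers. Then for all integers i, j with 0 ≤ i ≤ j and every t ≥ 0: e^{−a_j t} + Σ_{0≤k≤i, 0≤l≤j−i, (k,l)≠(0,0)} [C(i,k) C(j−i,l) / C(j, k+l)] · (Π_{m=j−k−l+1}^{j} a_m) · B_t(a_j, a_{j−1}, …, a_{j−k−l}) = 1, where C(m,k) denotes the binomial coefficient. -/

import Mathlib

open Finset Real

/-- `aC δ δ' n = n (2(n-1) + δ + δ')`. -/
noncomputable def aC (δ δ' : ℝ) (n : ℕ) : ℝ := (n : ℝ) * (2 * ((n : ℝ) - 1) + δ + δ')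

/-- `Bt t k b = B_t(b 0, …, b k)`. -/
noncomputable def Bt (t : ℝ) (k : ℕ) (b : ℕ → ℝ) : ℝ :=
  (-1 : ℝ) ^ k * ∑ j ∈ Finset.range (k + 1),
    (-1 : ℝ) ^ j * Real.exp (-(b j) * t) /
      ∏ l ∈ (Finset.range (k + 1)).erase j, |b j - b l|

/-! Put `b r = a (j - r)`, so that `b 0 > b 1 > ⋯ > b j = a 0 = 0`. Grouping the terms by
`n = k + l`, Vandermonde's identity `∑_{k+l=n} C(i,k) C(j-i,l) = C(j,n)` reduces the claim
to `∑_{n ≤ j} (b 0 ⋯ b (n-1)) B_t(b 0, …, b n) = 1`: the summands are the transition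
probabilities of a pure death chain with rates `b`. Since
`d/dt B_t(b 0, …, b (n+1)) = -b (n+1) B_t(b 0, …, b (n+1)) + B_t(b 0, …, b n)`,
the derivative of the sum telescopes to `-(b 0 ⋯ b j) B_t(b 0, …, b j) = 0`; and as `t → ∞`
only the term `n = j`, whose exponential `e^{-b j t} = 1` does not decay, survives, with
limit `1`. -/

open Filter Topology

section Bt

variable {b : ℕ → ℝ} {n : ℕ}

lemma Bt_zero (t : ℝ) (b : ℕ → ℝ) : Bt t 0 b = exp (-b 0 * t) := by
  simp [Bt]

lemma prod_erase_range_succ_abs_sub (hb : StrictAntiOn b (Set.Iic (n + 1))) {r : ℕ}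
    (hr : r ≤ n) :
    ∏ l ∈ (range (n + 2)).erase r, |b r - b l| =
      (b r - b (n + 1)) * ∏ l ∈ (range (n + 1)).erase r, |b r - b l| := by
  rw [range_add_one (n := n + 1), erase_insert_of_ne (by omega), prod_insert (by simp),
    abs_of_pos (sub_pos.mpr (hb (by simp; omega) (by simp) (by omega)))]

lemma prod_erase_range_abs_sub_pos (hb : StrictAntiOn b (Set.Iic n)) {r : ℕ} (hr : r ≤ n) :
    0 < ∏ l ∈ (range (n + 1)).erase r, |b r - b l| := by
  refine prod_pos fun l hl => abs_pos.mpr (sub_ne_zero.mpr fun h => ?_)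
  rw [mem_erase, mem_range] at hl
  exact hl.1 (hb.injOn (by simp; omega) (by simp; omega) h).symm

lemma hasDerivAt_Bt (t : ℝ) (k : ℕ) (b : ℕ → ℝ) :
    HasDerivAt (fun t => Bt t k b)
      ((-1) ^ k * ∑ r ∈ range (k + 1),
        -b r * ((-1) ^ r * exp (-b r * t) / ∏ l ∈ (range (k + 1)).erase r, |b r - b l|)) t := by
  refine (HasDerivAt.fun_sum fun r _ => ?_).const_mul _
  refine ((((hasDerivAt_id t).const_mul (-b r)).exp.const_mul ((-1) ^ r)).div_const
    (∏ l ∈ (range (k + 1)).erase r, |b r - b l|)).congr_deriv ?_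
  simp only [id_eq]
  ring

lemma hasDerivAt_Bt_succ (hb : StrictAntiOn b (Set.Iic (n + 1))) (t : ℝ) :
    HasDerivAt (fun t => Bt t (n + 1) b) (-b (n + 1) * Bt t (n + 1) b + Bt t n b) t := by
  set term := fun r =>
    (-1) ^ r * exp (-b r * t) / ∏ l ∈ (range (n + 1 + 1)).erase r, |b r - b l|
  have hlower :
      (-1) ^ (n + 1) * ∑ r ∈ range (n + 1 + 1), (b (n + 1) - b r) * term r = Bt t n b := by
    rw [sum_range_succ, sub_self, zero_mul, add_zero, Bt, mul_sum, mul_sum]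
    refine sum_congr rfl fun r hr => ?_
    have hr : r ≤ n := by simpa [Nat.lt_succ_iff] using hr
    have hD := prod_erase_range_abs_sub_pos (hb.mono (Set.Iic_subset_Iic.mpr n.le_succ)) hr
    have hgap : 0 < b r - b (n + 1) := sub_pos.mpr (hb (by simp; omega) (by simp) (by omega))
    simp only [term, prod_erase_range_succ_abs_sub hb hr]
    field_simp
    ring
  refine (hasDerivAt_Bt t (n + 1) b).congr_deriv ?_
  rw [← hlower]
  simp only [term, Bt, mul_sum, ← sum_add_distrib]
  exact sum_congr rfl fun r _ => by ring

lemma hasDerivAt_sum_prod_mul_Bt (hb : StrictAntiOn b (Set.Iic n)) (t : ℝ) :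
    HasDerivAt (fun t => ∑ k ∈ range (n + 1), (∏ r ∈ range k, b r) * Bt t k b)
      (-((∏ r ∈ range (n + 1), b r) * Bt t n b)) t := by
  induction n with
  | zero =>
    simp only [zero_add, range_one, sum_singleton, range_zero, prod_empty, one_mul, Bt_zero]
    refine ((hasDerivAt_id t).const_mul (-b 0)).exp.congr_deriv ?_
    simp only [id_eq, prod_singleton]; ring
  | succ n ih =>
    have step := (ih (hb.mono (Set.Iic_subset_Iic.mpr n.le_succ))).add
      ((hasDerivAt_Bt_succ hb t).const_mul (∏ r ∈ range (n + 1), b r))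
    simp only [sum_range_succ _ (n + 1)]
    refine step.congr_deriv ?_
    rw [prod_range_succ _ (n + 1)]
    ring

lemma tendsto_Bt_atTop {k : ℕ} (hb : ∀ r ≤ k, 0 ≤ b r) :
    Tendsto (fun t => Bt t k b) atTop
      (𝓝 ((-1) ^ k * ∑ r ∈ range (k + 1),
        (-1) ^ r * (if b r = 0 then 1 else 0) /
          ∏ l ∈ (range (k + 1)).erase r, |b r - b l|)) := by
  refine (tendsto_finsetSum _ fun r hr =>
    ((?_ : Tendsto _ _ _).const_mul _).div_const _).const_mul _
  rcases (hb r (by simp at hr; omega)).eq_or_lt with h | h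
  · simp [← h]
  · rw [if_neg h.ne']
    have := tendsto_exp_neg_atTop_nhds_zero.comp (tendsto_id.const_mul_atTop h)
    simpa [Function.comp_def, neg_mul] using this

lemma tendsto_sum_prod_mul_Bt_atTop (hb : StrictAntiOn b (Set.Iic n)) (hn : b n = 0) :
    Tendsto (fun t => ∑ k ∈ range (n + 1), (∏ r ∈ range k, b r) * Bt t k b)
      atTop (𝓝 1) := by
  have hpos : ∀ r < n, 0 < b r := fun r hr => hn ▸ hb (by simp; omega) (by simp) hr
  have hlim := tendsto_finsetSum (range (n + 1)) fun k hk =>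
    (tendsto_Bt_atTop (b := b) (k := k) fun r hr => by
      rcases (show r < n ∨ r = n by simp at hk; omega) with h | rfl
      exacts [(hpos r h).le, hn.ge]).const_mul (∏ r ∈ range k, b r)
  convert hlim using 2
  have hP : 0 < ∏ r ∈ range n, b r := prod_pos fun r hr => hpos r (mem_range.mp hr)
  rw [sum_eq_single_of_mem n (self_mem_range_succ n) fun k hk hkn => ?_,
    sum_eq_single_of_mem n (self_mem_range_succ n) fun r hr hrn => ?_, if_pos hn,
    range_add_one, erase_insert notMem_range_self]
  · simp only [hn, zero_sub, abs_neg]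
    rw [prod_congr rfl fun l hl => abs_of_pos (hpos l (mem_range.mp hl))]
    field_simp
    rw [← pow_mul, pow_mul', neg_one_sq, one_pow]
  · rw [if_neg (hpos r (by simp at hr; omega)).ne', mul_zero, zero_div]
  · rw [sum_eq_zero fun r hr => ?_, mul_zero, mul_zero]
    rw [if_neg (hpos r (by simp at hr hk; omega)).ne', mul_zero, zero_div]

theorem sum_prod_mul_Bt_eq_one (hb : StrictAntiOn b (Set.Iic n)) (hn : b n = 0) (t : ℝ) :
    ∑ k ∈ range (n + 1), (∏ r ∈ range k, b r) * Bt t k b = 1 := by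
  have hderiv (s : ℝ) := hasDerivAt_sum_prod_mul_Bt hb s
  simp only [prod_range_succ, hn, mul_zero, zero_mul, neg_zero] at hderiv
  have hconst := is_const_of_deriv_eq_zero (fun s => (hderiv s).differentiableAt)
    (fun s => (hderiv s).deriv)
  exact tendsto_nhds_unique (tendsto_const_nhds.congr (hconst t))
    (tendsto_sum_prod_mul_Bt_atTop hb hn)

end Bt

lemma prod_Icc_sub_add_one_eq_prod_range {M : Type*} [CommMonoid M] (f : ℕ → M) {n j : ℕ}
    (hn : n ≤ j) : ∏ m ∈ Icc (j - n + 1) j, f m = ∏ r ∈ range n, f (j - r) := by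
  rw [← Ico_add_one_right_eq_Icc, prod_Ico_eq_prod_range, ← prod_range_reflect,
    show j + 1 - (j - n + 1) = n by omega]
  exact prod_congr rfl fun r hr => congrArg f (by simp at hr; omega)

lemma sum_filter_add_eq_choose_mul_choose (i m n : ℕ) :
    ∑ kl ∈ (range (i + 1) ×ˢ range (m + 1)).filter (fun kl => kl.1 + kl.2 = n),
      i.choose kl.1 * m.choose kl.2 = (i + m).choose n := by
  rw [Nat.add_choose_eq]
  refine sum_subset (fun kl hkl => by simpa using (mem_filter.mp hkl).2) fun kl hkl hkl' => ?_
  simp only [mem_filter, mem_product, mem_range, HasAntidiagonal.mem_antidiagonal] at hkl hkl'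
  rcases Nat.lt_or_ge i kl.1 with h | h
  · rw [Nat.choose_eq_zero_of_lt h, zero_mul]
  · rw [Nat.choose_eq_zero_of_lt (by omega : m < kl.2), mul_zero]

lemma sum_choose_mul_choose_div_choose_mul {i j : ℕ} (hij : i ≤ j) (F : ℕ → ℝ) :
    ∑ kl ∈ range (i + 1) ×ˢ range (j - i + 1),
      ((i.choose kl.1 : ℝ) * ((j - i).choose kl.2 : ℝ) / (j.choose (kl.1 + kl.2) : ℝ)) *
        F (kl.1 + kl.2)
      = ∑ n ∈ range (j + 1), F n := by
  rw [← sum_fiberwise_of_maps_to (g := fun kl : ℕ × ℕ => kl.1 + kl.2) (t := range (j + 1))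
    fun kl hkl => by simp only [mem_product, mem_range] at hkl ⊢; omega]
  refine sum_congr rfl fun n hn => ?_
  have hchoose : (j.choose n : ℝ) ≠ 0 :=
    Nat.cast_ne_zero.mpr (Nat.choose_pos (by simp at hn; omega)).ne'
  rw [sum_congr rfl fun kl hkl => by rw [(mem_filter.mp hkl).2], ← sum_mul, ← sum_div]
  have hvandermonde :
      ∑ kl ∈ (range (i + 1) ×ˢ range (j - i + 1)).filter (fun kl => kl.1 + kl.2 = n),
        (i.choose kl.1 : ℝ) * ((j - i).choose kl.2 : ℝ) = j.choose n := by
    have h := sum_filter_add_eq_choose_mul_choose i (j - i) n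
    rw [Nat.add_sub_cancel' hij] at h
    exact_mod_cast h
  rw [hvandermonde, div_self hchoose, one_mul]

lemma aC_strictMono {δ δ' : ℝ} (hδ : 2 ≤ δ) (hδ' : 2 ≤ δ') :
    StrictMono (aC δ δ') := by
  refine strictMono_nat_of_lt_succ fun n => ?_
  simp only [aC]
  push_cast
  nlinarith [n.cast_nonneg (α := ℝ)]

theorem stmt16_general (δ δ' : ℝ) (hδ : 2 ≤ δ) (hδ' : 2 ≤ δ')
    (i j : ℕ) (hij : i ≤ j) (t : ℝ) :
    Real.exp (-(aC δ δ' j) * t) +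
        ∑ kl ∈ (Finset.range (i + 1) ×ˢ Finset.range (j - i + 1)).erase (0, 0),
          ((i.choose kl.1 : ℝ) * ((j - i).choose kl.2 : ℝ) / (j.choose (kl.1 + kl.2) : ℝ)) *
            (∏ m ∈ Finset.Icc (j - kl.1 - kl.2 + 1) j, aC δ δ' m) *
            Bt t (kl.1 + kl.2) (fun r => aC δ δ' (j - r))
      = 1 := by
  have hb : StrictAntiOn (fun r => aC δ δ' (j - r)) (Set.Iic j) :=
    fun r hr l hl hrl => aC_strictMono hδ hδ' (by simp only [Set.mem_Iic] at hr hl; omega)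
  have hmem : ((0, 0) : ℕ × ℕ) ∈ range (i + 1) ×ˢ range (j - i + 1) := by simp
  calc _ = ∑ kl ∈ range (i + 1) ×ˢ range (j - i + 1),
          ((i.choose kl.1 : ℝ) * ((j - i).choose kl.2 : ℝ) / (j.choose (kl.1 + kl.2) : ℝ)) *
            ((∏ m ∈ Icc (j - (kl.1 + kl.2) + 1) j, aC δ δ' m) *
              Bt t (kl.1 + kl.2) (fun r => aC δ δ' (j - r))) := by
        rw [← add_sum_erase _ _ hmem]
        simp [Bt_zero, mul_assoc, Nat.sub_sub]
    _ = ∑ n ∈ range (j + 1),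
          (∏ r ∈ range n, aC δ δ' (j - r)) * Bt t n (fun r => aC δ δ' (j - r)) := by
        rw [sum_choose_mul_choose_div_choose_mul hij fun n =>
          (∏ m ∈ Icc (j - n + 1) j, aC δ δ' m) * Bt t n (fun r => aC δ δ' (j - r))]
        exact sum_congr rfl fun n hn =>
          by rw [prod_Icc_sub_add_one_eq_prod_range _ (by simpa [Nat.lt_succ_iff] using hn)]
    _ = 1 := sum_prod_mul_Bt_eq_one hb (by simp [aC]) t

theorem stmt16 (δ δ' : ℝ) (hδ : 2 ≤ δ) (hδ' : 2 ≤ δ')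
    (i j : ℕ) (hij : i ≤ j) (t : ℝ) (ht : 0 ≤ t) :
    Real.exp (-(aC δ δ' j) * t) +
        ∑ kl ∈ (Finset.range (i + 1) ×ˢ Finset.range (j - i + 1)).erase (0, 0),
          ((i.choose kl.1 : ℝ) * ((j - i).choose kl.2 : ℝ) / (j.choose (kl.1 + kl.2) : ℝ)) *
            (∏ m ∈ Finset.Icc (j - kl.1 - kl.2 + 1) j, aC δ δ' m) *
            Bt t (kl.1 + kl.2) (fun r => aC δ δ' (j - r))
      = 1 :=
  stmt16_general δ δ' hδ hδ' i j hij t
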